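/- Let m and r be natural numbers with r ≤ m, let d_1, …, d_m be positive integers, and let e be a positive integer. Suppose Q, P ∈ ℤ[X] satisfy: Q has constant coefficient 1; deg Q ≤ r; deg P ≤ m; the coefficient of X^m in P equals d_1⋯d_m; and e·X^r·∏_{i=1}^{m} (1 + d_i·X) = Q·P in ℤ[X]. Then there exists a sub-multiset T of the multiset {d_1, …, d_m}, of cardinality r, such that Q = ∏_{a ∈ T} (1 + a·X), e = ∏_{a ∈ T} a, and P = e·X^r·∏_{a ∈ T^c} (1 + a·X), where T^c is the complementary sub-multiset. -/

import Mathlib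

/-!
Each `1 + aX` with `a ≠ 0` is primitive of degree one, hence prime in the factorial ring `ℤ[X]`.
Comparing degrees in `e·X^r·∏(1 + dᵢX) = Q·P` forces `deg Q = r` and `deg P = m`. As `X ∤ Q`,
`X^r` divides `P`, and Gauss's lemma (`Q` is primitive) turns `Q ∣ e·∏(1 + dᵢX)` into
`Q ∣ ∏(1 + dᵢX)`. So `Q` is associated to the product over a sub-multiset `T`, and equal to it
since both have constant coefficient `1`. Cancelling `Q` gives `P = e·X^r·∏_{Tᶜ}(1 + aX)`, and
comparing the coefficients of `X^m` gives `e·∏ Tᶜ = ∏ T·∏ Tᶜ`, i.e. `e = ∏ T`.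
-/

open Polynomial

namespace Multiset

theorem exists_le_associated_of_dvd_prod_map {ι M₀ : Type*} [CommMonoidWithZero M₀]
    [IsCancelMulZero M₀] {f : ι → M₀} {s : Multiset ι} (hs : ∀ i ∈ s, Prime (f i)) {a : M₀}
    (ha : a ∣ (s.map f).prod) : ∃ t ≤ s, Associated a (t.map f).prod := by
  induction s using Multiset.induction_on generalizing a with
  | empty => exact ⟨0, le_rfl, by simpa using isUnit_of_dvd_one (by simpa using ha)⟩
  | cons i s ih =>
    have hi : Prime (f i) := hs i (mem_cons_self i s)
    have hs' : ∀ j ∈ s, Prime (f j) := fun j hj => hs j (mem_cons_of_mem hj)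
    rw [map_cons, prod_cons] at ha
    obtain ⟨b, hb⟩ := ha
    rcases hi.dvd_or_dvd ⟨_, hb.symm⟩ with ⟨a', rfl⟩ | ⟨b', rfl⟩
    · obtain ⟨t, hts, ht⟩ :=
        ih hs' ⟨b, mul_left_cancel₀ hi.ne_zero (hb.trans (mul_assoc _ _ _))⟩
      exact ⟨i ::ₘ t, cons_le_cons i hts, by simpa using ht.mul_left (f i)⟩
    · obtain ⟨t, hts, ht⟩ :=
        ih hs' ⟨b', mul_left_cancel₀ hi.ne_zero (hb.trans (mul_left_comm _ _ _))⟩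
      exact ⟨t, hts.trans (le_cons_self s i), ht⟩

theorem prod_map_eq_mul_prod_map_sub {ι M : Type*} [CommMonoid M] [DecidableEq ι]
    {s t : Multiset ι} (h : t ≤ s) (f : ι → M) :
    (s.map f).prod = (t.map f).prod * ((s - t).map f).prod := by
  conv_lhs => rw [← add_tsub_cancel_of_le h]
  rw [map_add, prod_add]

theorem eq_prod_map_of_mul_prod_map_sub_eq {ι M₀ : Type*} [CommMonoidWithZero M₀]
    [IsCancelMulZero M₀] [Nontrivial M₀] [DecidableEq ι] {s t : Multiset ι} (h : t ≤ s)
    {f : ι → M₀} (hf : ∀ i ∈ s, f i ≠ 0) {a : M₀}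
    (ha : a * ((s - t).map f).prod = (s.map f).prod) : a = (t.map f).prod := by
  refine mul_right_cancel₀ (prod_ne_zero fun h0 => ?_) (ha.trans (prod_map_eq_mul_prod_map_sub h f))
  obtain ⟨i, hi, hi0⟩ := mem_map.mp h0
  exact hf i (mem_of_le tsub_le_self hi) hi0

end Multiset

namespace Polynomial

theorem natDegree_eq_of_natDegree_mul_eq_add {R : Type*} [Semiring R] {p q : R[X]} {m n : ℕ}
    (hp : p.natDegree ≤ m) (hq : q.natDegree ≤ n) (h : (p * q).natDegree = m + n) :
    p.natDegree = m ∧ q.natDegree = n := by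
  have := natDegree_mul_le (p := p) (q := q)
  omega

theorem exists_eq_X_pow_mul_of_mul_eq_X_pow_mul {R : Type*} [CommRing R] [IsDomain R]
    {p q g : R[X]} (hp : p.coeff 0 ≠ 0) (n : ℕ) (h : p * q = X ^ n * g) :
    ∃ q₁, q = X ^ n * q₁ ∧ p * q₁ = g := by
  obtain ⟨q₁, rfl⟩ : X ^ n ∣ q :=
    prime_X.pow_dvd_of_dvd_mul_left n (by rwa [X_dvd_iff]) ⟨g, by rw [h]⟩
  exact ⟨q₁, rfl, mul_left_cancel₀ (pow_ne_zero n X_ne_zero) (by rw [← h]; ring)⟩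

theorem isPrimitive_of_coeff_zero_eq_one {R : Type*} [CommSemiring R] {p : R[X]}
    (hp : p.coeff 0 = 1) : p.IsPrimitive :=
  fun r ⟨q, hq⟩ => isUnit_of_dvd_one ⟨q.coeff 0, by rw [← hp, hq, coeff_C_mul]⟩

theorem IsPrimitive.dvd_of_dvd_C_mul {R : Type*} [CommRing R] [IsDomain R]
    [NormalizedGCDMonoid R] {p q : R[X]} (hp : p.IsPrimitive) {r : R} (hr : r ≠ 0)
    (h : p ∣ C r * q) : p ∣ q := by
  rcases eq_or_ne q 0 with rfl | hq
  · exact dvd_zero p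
  have hrq : C r * q ≠ 0 := mul_ne_zero (C_ne_zero.mpr hr) hq
  rw [← hp.dvd_primPart_iff_dvd hrq, (associated_primPart_mul hrq).dvd_iff_dvd_right,
    (isUnit_primPart_C r).dvd_mul_left] at h
  exact h.trans q.primPart_dvd

theorem eq_of_associated_of_coeff_zero_eq {R : Type*} [CommRing R] [IsDomain R] {p q : R[X]}
    (h : Associated p q) (h0 : p.coeff 0 = q.coeff 0) (hp : p.coeff 0 ≠ 0) : p = q := by
  obtain ⟨u, rfl⟩ := h
  obtain ⟨c, -, hc⟩ := isUnit_iff.mp u.isUnit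
  rw [← hc, coeff_mul_C] at h0
  rw [← hc, mul_left_cancel₀ hp (h0.symm.trans (mul_one _).symm), C_1, mul_one]

section OneAddCMulX

variable {ι R : Type*}

section CommSemiring

variable [CommSemiring R]

theorem natDegree_one_add_C_mul_X {a : R} (ha : a ≠ 0) : (1 + C a * X).natDegree = 1 := by
  rw [add_comm, ← C_1, natDegree_linear ha]

theorem coeff_zero_prod_one_add_C_mul_X (s : Multiset ι) (c : ι → R) :
    (s.map fun i => 1 + C (c i) * X).prod.coeff 0 = 1 := by
  simp [coeff_zero_multiset_prod]

theorem prod_one_add_C_mul_X_ne_zero [Nontrivial R] (s : Multiset ι) (c : ι → R) :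
    (s.map fun i => 1 + C (c i) * X).prod ≠ 0 :=
  fun h => by simpa [h] using coeff_zero_prod_one_add_C_mul_X s c

variable [NoZeroDivisors R] {s : Multiset ι} {c : ι → R}

theorem natDegree_prod_one_add_C_mul_X [Nontrivial R] (hc : ∀ i ∈ s, c i ≠ 0) :
    (s.map fun i => 1 + C (c i) * X).prod.natDegree = Multiset.card s := by
  rw [natDegree_multiset_prod, Multiset.map_map, Function.comp_def,
    Multiset.map_congr (g := fun _ => 1) rfl fun i hi => natDegree_one_add_C_mul_X (hc i hi)]
  · simp
  · simp only [Multiset.mem_map, not_exists, not_and]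
    exact fun i _ h => by simpa using congrArg (coeff · 0) h

theorem leadingCoeff_prod_one_add_C_mul_X (hc : ∀ i ∈ s, c i ≠ 0) :
    (s.map fun i => 1 + C (c i) * X).prod.leadingCoeff = (s.map c).prod := by
  rw [leadingCoeff_multiset_prod, Multiset.map_map]
  refine congrArg _ (Multiset.map_congr rfl fun i hi => ?_)
  rw [Function.comp_apply, add_comm, ← C_1, leadingCoeff_linear (hc i hi)]

end CommSemiring

variable [CommRing R] [IsDomain R]

theorem prime_one_add_C_mul_X [UniqueFactorizationMonoid R] {a : R} (ha : a ≠ 0) :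
    Prime (1 + C a * X) := by
  rw [add_comm, ← C_1]
  exact (irreducible_C_mul_X_add_C ha isRelPrime_one_right).prime

theorem exists_le_eq_prod_one_add_C_mul_X_of_dvd_C_mul [NormalizedGCDMonoid R]
    [UniqueFactorizationMonoid R] {s : Multiset ι} {c : ι → R} (hc : ∀ i ∈ s, c i ≠ 0)
    {q : R[X]} (hq : q.coeff 0 = 1) {a : R} (ha : a ≠ 0)
    (h : q ∣ C a * (s.map fun i => 1 + C (c i) * X).prod) :
    ∃ t ≤ s, q = (t.map fun i => 1 + C (c i) * X).prod := by
  obtain ⟨t, hts, hqt⟩ := Multiset.exists_le_associated_of_dvd_prod_map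
    (fun i hi => prime_one_add_C_mul_X (hc i hi))
    ((isPrimitive_of_coeff_zero_eq_one hq).dvd_of_dvd_C_mul ha h)
  refine ⟨t, hts, eq_of_associated_of_coeff_zero_eq hqt ?_ ?_⟩ <;>
    simp [hq, coeff_zero_prod_one_add_C_mul_X]

end OneAddCMulX

theorem exists_le_of_C_mul_X_pow_mul_prod_eq_mul {s : Multiset ℕ} (hs : ∀ a ∈ s, 0 < a)
    {e r : ℕ} (he : 0 < e) {Q P : ℤ[X]} (hQ0 : Q.coeff 0 = 1) (hQdeg : Q.natDegree ≤ r)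
    (hPdeg : P.natDegree ≤ Multiset.card s)
    (hPtop : P.coeff (Multiset.card s) = (s.map Nat.cast).prod)
    (heq : C (e : ℤ) * X ^ r * (s.map fun a : ℕ => 1 + C (a : ℤ) * X).prod = Q * P) :
    ∃ T ≤ s, Multiset.card T = r ∧ Q = (T.map fun a : ℕ => 1 + C (a : ℤ) * X).prod ∧
      e = T.prod ∧ P = C (e : ℤ) * X ^ r * ((s - T).map fun a : ℕ => 1 + C (a : ℤ) * X).prod := by
  have hs' : ∀ a ∈ s, (a : ℤ) ≠ 0 := fun a ha => by exact_mod_cast (hs a ha).ne'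
  have he' : (e : ℤ) ≠ 0 := by exact_mod_cast he.ne'
  obtain ⟨hQr, hPm⟩ := natDegree_eq_of_natDegree_mul_eq_add hQdeg hPdeg <| by
    rw [← heq, natDegree_mul (by simpa using he') (prod_one_add_C_mul_X_ne_zero _ _),
      natDegree_C_mul_X_pow _ _ he', natDegree_prod_one_add_C_mul_X hs']
  have hQP : Q * P = X ^ r * (C (e : ℤ) * (s.map fun a : ℕ => 1 + C (a : ℤ) * X).prod) := by
    rw [← heq]; ring
  obtain ⟨P₁, rfl, hQP₁⟩ := exists_eq_X_pow_mul_of_mul_eq_X_pow_mul (hQ0 ▸ one_ne_zero) r hQP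
  obtain ⟨T, hTs, rfl⟩ :=
    exists_le_eq_prod_one_add_C_mul_X_of_dvd_C_mul hs' hQ0 he' ⟨P₁, hQP₁.symm⟩
  obtain rfl : P₁ = C (e : ℤ) * ((s - T).map fun a : ℕ => 1 + C (a : ℤ) * X).prod := by
    refine mul_left_cancel₀ (prod_one_add_C_mul_X_ne_zero T (Nat.cast : ℕ → ℤ)) ?_
    rw [hQP₁, Multiset.prod_map_eq_mul_prod_map_sub hTs]
    ring
  refine ⟨T, hTs, ?_, rfl, ?_, by ring⟩
  · rw [← hQr, natDegree_prod_one_add_C_mul_X fun a ha => hs' a (Multiset.mem_of_le hTs ha)]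
  · refine Nat.cast_injective ((Multiset.eq_prod_map_of_mul_prod_map_sub_eq hTs hs' ?_).trans
      (Nat.cast_multiset_prod T).symm)
    rw [← hPtop, ← hPm, ← leadingCoeff, leadingCoeff_mul, leadingCoeff_mul, leadingCoeff_X_pow,
      leadingCoeff_C, one_mul, leadingCoeff_prod_one_add_C_mul_X
        fun a ha => hs' a (Multiset.mem_of_le tsub_le_self ha)]

end Polynomial

theorem unique_factorization_lci_general (m r : ℕ) (d : Fin m → ℕ)
    (hd : ∀ i, 0 < d i) (e : ℕ) (he : 0 < e) (Q P : Polynomial ℤ)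
    (hQ0 : Q.coeff 0 = 1) (hQdeg : Q.natDegree ≤ r) (hPdeg : P.natDegree ≤ m)
    (hPtop : P.coeff m = ∏ i, (d i : ℤ))
    (heq : Polynomial.C (e : ℤ) * Polynomial.X ^ r *
        ∏ i, (1 + Polynomial.C (d i : ℤ) * Polynomial.X) = Q * P) :
    ∃ T : Multiset ℕ, T ≤ Finset.univ.val.map d ∧ Multiset.card T = r ∧
      Q = (T.map fun a => 1 + Polynomial.C (a : ℤ) * Polynomial.X).prod ∧
      e = T.prod ∧
      P = Polynomial.C (e : ℤ) * Polynomial.X ^ r *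
        ((Finset.univ.val.map d - T).map
          fun a => 1 + Polynomial.C (a : ℤ) * Polynomial.X).prod := by
  -- In the statement `(a : ℤ)` coerces the multiset `T` itself, through its monad structure.
  simp only [bind_pure_comp, Multiset.fmap_def, Multiset.map_map, Function.comp_def]
  simp only [Finset.prod_eq_multiset_prod] at hPtop heq
  have hcard : Multiset.card (Finset.univ.val.map d) = m := by simp
  refine exists_le_of_C_mul_X_pow_mul_prod_eq_mul ?_ he hQ0 hQdeg (by rwa [hcard]) ?_ ?_
  · simpa using hd
  · rwa [hcard, Multiset.map_map]
  · rwa [Multiset.map_map]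

/-- Unique factorization step in the proof that local complete
intersections of small codimension have the Segre zeta function of a global complete
intersection: if `e·X^r·∏ᵢ(1 + dᵢX) = Q·P` with `Q(0) = 1`, `deg Q ≤ r`, `deg P ≤ m`,
and the coefficient of `X^m` in `P` equal to `d₁⋯d_m`, then `Q` is the product of the
factors `(1 + aX)` over a sub-multiset `T` of `{d₁, …, d_m}` of cardinality `r`,
`e = ∏_{a ∈ T} a`, and `P = e·X^r·∏_{a ∈ Tᶜ} (1 + aX)`. -/
theorem unique_factorization_lci (m r : ℕ) (hrm : r ≤ m) (d : Fin m → ℕ)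
    (hd : ∀ i, 0 < d i) (e : ℕ) (he : 0 < e) (Q P : Polynomial ℤ)
    (hQ0 : Q.coeff 0 = 1) (hQdeg : Q.natDegree ≤ r) (hPdeg : P.natDegree ≤ m)
    (hPtop : P.coeff m = ∏ i, (d i : ℤ))
    (heq : Polynomial.C (e : ℤ) * Polynomial.X ^ r *
        ∏ i, (1 + Polynomial.C (d i : ℤ) * Polynomial.X) = Q * P) :
    ∃ T : Multiset ℕ, T ≤ Finset.univ.val.map d ∧ Multiset.card T = r ∧
      Q = (T.map fun a => 1 + Polynomial.C (a : ℤ) * Polynomial.X).prod ∧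
      e = T.prod ∧
      P = Polynomial.C (e : ℤ) * Polynomial.X ^ r *
        ((Finset.univ.val.map d - T).map
          fun a => 1 + Polynomial.C (a : ℤ) * Polynomial.X).prod :=
  unique_factorization_lci_general m r d hd e he Q P hQ0 hQdeg hPdeg hPtop heq
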